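/- The multiplication on B_0(m,k) defined by φ^{x,y}(a) * φ^{y,z}(b) = φ^{x,z}(a·b·g^{x,y,z}), where g^{x,y,z} = U_1^{t_1}···U_m^{t_m} with t_i = w^{x,y}_i + w^{y,z}_i − w^{x,z}_i (and products over non-matching idempotents set to zero), is associative, and the weight function w(φ^{x,y}(U_1^{s_1}···U_m^{s_m})) = w^{x,y} + (s_1,...,s_m) is additive: w(a*b) = w(a) + w(b) whenever a*b ≠ 0 for weight-homogeneous a, b. -/
import Mathlib


/-- Idempotent states: `k`-element subsets of `{0,1,...,m}`. -/
abbrev IdemState (m k : ℕ) := {x : Finset (Fin (m + 1)) // x.card = k}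

/-- The weight `v^x` at coordinate `c : Fin m`, representing the paper's
`v^x_{c+1} = #{a ∈ x : a ≥ c+1}` (coordinate `c` corresponds to the strand
labelled `c+1`). -/
def vwt {m : ℕ} (x : Finset (Fin (m + 1))) (c : Fin m) : ℕ :=
  (x.filter (fun a => (c : ℕ) < a.val)).card

/-- Twice the minimal relative weight: `2·w^{x,y}_{c+1} = |v^x_{c+1} − v^y_{c+1}|`. -/
def wnum {m : ℕ} (x y : Finset (Fin (m + 1))) (c : Fin m) : ℕ :=
  ((vwt x c : ℤ) - (vwt y c : ℤ)).natAbs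

/-- Basis elements of `B₀(m,k)`: a pair of idempotent states together with a
monomial `U_1^{s_1} ⋯ U_m^{s_m}` (recorded by its exponents); the basis element
is `φ^{x,y}(U^s)`. -/
structure BGen (m k : ℕ) where
  l : IdemState m k
  r : IdemState m k
  s : Fin m → ℕ
deriving DecidableEq

/-- The exponents `t_i = w^{x,y}_i + w^{y,z}_i − w^{x,z}_i` of the correction
monomial `g^{x,y,z} = U_1^{t_1} ⋯ U_m^{t_m}`. -/
def texp {m k : ℕ} (x y z : IdemState m k) (c : Fin m) : ℕ :=
  (wnum x.1 y.1 c + wnum y.1 z.1 c - wnum x.1 z.1 c) / 2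

/-- The product of two basis elements of `B₀(m,k)`:
`φ^{x,y}(U^s) * φ^{y',z}(U^{s'})` is zero (i.e. `none`) unless `y = y'`, in
which case it equals `φ^{x,z}(U^s · U^{s'} · g^{x,y,z})`. -/
def mulBGen {m k : ℕ} (a b : BGen m k) : Option (BGen m k) :=
  if a.r = b.l then
    some ⟨a.l, b.r, fun c => a.s c + b.s c + texp a.l a.r b.r c⟩
  else none

/-- The weight of the basis element `φ^{x,y}(U^s)`:
`w_i = w^{x,y}_i + s_i ∈ ½ℤ`, as a rational number. -/
def bweight {m k : ℕ} (g : BGen m k) (c : Fin m) : ℚ :=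
  (wnum g.l.1 g.r.1 c : ℚ) / 2 + (g.s c : ℚ)

/-- Multiplication of basis elements, extended to `0` (encoded by `none`). -/
def mulO {m k : ℕ} : Option (BGen m k) → Option (BGen m k) → Option (BGen m k)
  | some a, some b => mulBGen a b
  | _, _ => none

lemma texp_spec {m k : ℕ} (x y z : IdemState m k) (c : Fin m) :
    (2 * texp x y z c : ℤ) =
      (wnum x.1 y.1 c : ℤ) + wnum y.1 z.1 c - wnum x.1 z.1 c := by
  simp only [texp, wnum]
  omega

/-- The multiplication on `B₀(m,k)` given by
`φ^{x,y}(a) * φ^{y,z}(b) = φ^{x,z}(a·b·g^{x,y,z})`, with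
`g^{x,y,z} = U_1^{t_1}⋯U_m^{t_m}`, `t_i = w^{x,y}_i + w^{y,z}_i − w^{x,z}_i`
(and products over non-matching idempotents set to zero), is associative, and
the weight function `w(φ^{x,y}(U^s)) = w^{x,y} + s` is additive:
`w(a*b) = w(a) + w(b)` whenever `a*b ≠ 0` for weight-homogeneous `a`, `b`.
(Since `B₀(m,k)` is spanned over `F₂` by these basis elements and the product
of two basis elements is again a basis element or zero, associativity of the
bilinear extension is equivalent to associativity at the basis level.) -/
theorem B0_mul_assoc_and_weight_additive (m k : ℕ) (hk : k ≤ m + 1) :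
    (∀ a b c : Option (BGen m k), mulO (mulO a b) c = mulO a (mulO b c)) ∧
    (∀ a b ab : BGen m k, mulBGen a b = some ab →
      ∀ c : Fin m, bweight ab c = bweight a c + bweight b c) := by
  constructor
  · intro a b c
    rcases a with _ | ⟨x, y, s1⟩
    · rfl
    rcases b with _ | ⟨y', z, s2⟩
    · cases c <;> rfl
    rcases c with _ | ⟨z', w, s3⟩
    · cases h : mulBGen ⟨x, y, s1⟩ ⟨y', z, s2⟩ <;> rw [show mulO (some ⟨x, y, s1⟩) (some ⟨y', z, s2⟩) = mulBGen ⟨x, y, s1⟩ ⟨y', z, s2⟩ from rfl, h] <;> rfl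
    by_cases h1 : y = y'
    · subst h1
      by_cases h2 : z = z'
      · subst h2
        simp only [mulO, mulBGen, if_pos rfl, if_true, Option.some.injEq,
          BGen.mk.injEq, true_and, eq_self_iff_true]
        funext i
        have t1 := texp_spec x y z i
        have t2 := texp_spec x z w i
        have t3 := texp_spec y z w i
        have t4 := texp_spec x y w i
        omega
      · simp [mulO, mulBGen, h2]
    · by_cases h2 : z = z' <;> simp [mulO, mulBGen, h1, h2]
  · rintro ⟨x, y, s1⟩ ⟨y', z, s2⟩ ab h c
    unfold mulBGen at h
    split at h
    · rename_i hy
      simp only at hy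
      subst hy
      injection h with h
      subst h
      simp only [bweight]
      have t := texp_spec x y z c
      have t' : ((2 * texp x y z c : ℤ) : ℚ) =
          (((wnum x.1 y.1 c : ℤ) + wnum y.1 z.1 c - wnum x.1 z.1 c : ℤ) : ℚ) := by
        rw [t]
      push_cast at t'
      push_cast
      linarith
    · exact absurd h (by simp)
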